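/- Let p ≥ 1 and let F = F_0 + F_1 + ⋯ + F_p be a polynomial vector field on ℝⁿ with F_i ∈ L_i and top term F_p(x) = (1/(p+1)) · (x_1^{p+1}, …, x_n^{p+1}). Then there is no centralizer of F of the form G = G_0 + ⋯ + G_j with G_i ∈ L_i, G_j ≠ 0 and j ≠ p; i.e. if G is a nonzero polynomial vector field with [F, G] = 0, then its highest-degree homogeneous component lies in L_p (has components of degree p+1). -/

import Mathlib

/-!
In degree `p + j + 1` the bracket `[F, G]` reduces to `[F_p, G_j]`, so `[F_p, G_j] = 0`.
With `F_p = (x_1^{p+1}, …, x_n^{p+1}) / (p+1)` this says that every nonzero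
component `g = G_{j,i}` satisfies `∑_l x_l^p · x_l ∂_l g = (p+1) x_i^p g`.
Comparing coefficients at `x^m · x_k^p`, where `m` is a monomial of `g` of maximal degree in
`x_k`, gives `deg_{x_k} g = p + 1` for `k = i` and `0` otherwise. Hence `g` is a multiple of
`x_i^{p+1}`, and being homogeneous of degree `j + 1` forces `j = p`.
-/

open MvPolynomial

/-- The Lie bracket `[F,G](x) = (dG/dx)(x) F(x) − (dF/dx)(x) G(x)` of polynomial vector
fields on `ℝⁿ`. -/
noncomputable def bracket {n : ℕ} (F G : Fin n → MvPolynomial (Fin n) ℝ) :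
    Fin n → MvPolynomial (Fin n) ℝ :=
  fun i => (∑ j, pderiv j (G i) * F j) - ∑ j, pderiv j (F i) * G j

namespace MvPolynomial

variable {R σ : Type*}

section CommSemiring

variable [CommSemiring R]

theorem coeff_X_mul_pderiv (k : σ) (f : MvPolynomial σ R) (m : σ →₀ ℕ) :
    coeff m (X k * pderiv k f) = m k * coeff m f := by
  induction f using MvPolynomial.induction_on' with
  | monomial s a =>
    classical
    rw [X_mul_pderiv_monomial, coeff_smul, coeff_monomial, nsmul_eq_mul]
    split_ifs with h <;> simp [h]
  | add f g hf hg => simp only [map_add, mul_add, coeff_add, hf, hg]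

theorem degreeOf_X_mul_pderiv_le (k l : σ) (f : MvPolynomial σ R) :
    degreeOf k (X l * pderiv l f) ≤ degreeOf k f := by
  refine degreeOf_le_iff.2 fun m hm => le_degreeOf_of_mem_support k ?_
  rw [mem_support_iff, coeff_X_mul_pderiv] at hm
  rw [mem_support_iff]
  exact right_ne_zero_of_mul hm

theorem coeff_X_pow_mul_eq_zero_of_degreeOf_lt {k l : σ} (hlk : l ≠ k) (p : ℕ)
    {f : MvPolynomial σ R} {M : σ →₀ ℕ} (hM : degreeOf k f < M k) :
    coeff M (X l ^ p * f) = 0 := by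
  classical
  rw [X_pow_eq_monomial, coeff_monomial_mul']
  split_ifs
  · rw [notMem_support_iff.1 (notMem_support_of_degreeOf_lt k ?_), mul_zero]
    rwa [Finsupp.tsub_apply, Finsupp.single_eq_of_ne hlk.symm, Nat.sub_zero]
  · rfl

theorem coeff_add_single_X_pow_mul (k : σ) (p : ℕ) (f : MvPolynomial σ R) (m : σ →₀ ℕ) :
    coeff (m + Finsupp.single k p) (X k ^ p * f) = coeff m f := by
  rw [X_pow_eq_monomial, add_comm, coeff_monomial_mul, one_mul]

theorem exists_mem_support_eq_degreeOf {f : MvPolynomial σ R} (hf : f ≠ 0) (k : σ) :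
    ∃ m ∈ f.support, m k = degreeOf k f := by
  obtain ⟨m, hm, h⟩ := Finset.exists_mem_eq_sup _ (support_nonempty.2 hf) fun m => m k
  exact ⟨m, hm, by rw [degreeOf_eq_sup, h]⟩

theorem single_degreeOf_mem_support [DecidableEq σ] {f : MvPolynomial σ R} (hf : f ≠ 0)
    {i : σ} (h : ∀ k ≠ i, degreeOf k f = 0) : Finsupp.single i (degreeOf i f) ∈ f.support := by
  obtain ⟨m, hm, hmi⟩ := exists_mem_support_eq_degreeOf hf i
  convert hm using 1
  ext k
  rcases eq_or_ne k i with rfl | hk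
  · simp [hmi]
  · rw [Finsupp.single_eq_of_ne hk]
    exact (Nat.eq_zero_of_le_zero (h k hk ▸ le_degreeOf_of_mem_support k hm)).symm

end CommSemiring

theorem natCast_degreeOf_eq_of_sum_X_pow_mul_X_mul_pderiv [CommRing R] [IsDomain R]
    [Fintype σ] [DecidableEq σ] {p : ℕ} (hp : 1 ≤ p) (a : R) (i : σ) {g : MvPolynomial σ R}
    (hg : g ≠ 0) (h : ∑ l, X l ^ p * (X l * pderiv l g) = C a * X i ^ p * g) (k : σ) :
    (degreeOf k g : R) = if k = i then a else 0 := by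
  obtain ⟨m, hm, hmk⟩ := exists_mem_support_eq_degreeOf hg k
  have hlt : degreeOf k g < (m + Finsupp.single k p) k := by
    rw [Finsupp.add_apply, Finsupp.single_eq_same, ← hmk]
    omega
  have hcoeff := congrArg (coeff (m + Finsupp.single k p)) h
  rw [coeff_sum, Finset.sum_eq_single k, coeff_add_single_X_pow_mul, coeff_X_mul_pderiv,
    mul_assoc, coeff_C_mul] at hcoeff
  rotate_left
  · exact fun l _ hlk => coeff_X_pow_mul_eq_zero_of_degreeOf_lt hlk p
      ((degreeOf_X_mul_pderiv_le k l g).trans_lt hlt)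
  · simp
  rw [← hmk]
  refine mul_right_cancel₀ (mem_support_iff.1 hm) (hcoeff.trans ?_)
  split_ifs with hki
  · rw [hki, coeff_add_single_X_pow_mul]
  · rw [coeff_X_pow_mul_eq_zero_of_degreeOf_lt (Ne.symm hki) p hlt, mul_zero, zero_mul]

end MvPolynomial

section Bracket

variable {n : ℕ}

theorem bracket_isHomogeneous {F G : Fin n → MvPolynomial (Fin n) ℝ} {a b : ℕ}
    (hF : ∀ k, (F k).IsHomogeneous (a + 1)) (hG : ∀ k, (G k).IsHomogeneous (b + 1))
    (i : Fin n) : (bracket F G i).IsHomogeneous (a + b + 1) := by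
  refine .sub (.sum _ _ _ fun k _ => ?_) (.sum _ _ _ fun k _ => ?_)
  · have h := ((hG i).pderiv (i := k)).mul (hF k)
    rwa [Nat.add_sub_cancel, show b + (a + 1) = a + b + 1 by omega] at h
  · have h := ((hF i).pderiv (i := k)).mul (hG k)
    rwa [Nat.add_sub_cancel, ← add_assoc] at h

theorem bracket_sum_sum (s t : Finset ℕ) (F G : ℕ → Fin n → MvPolynomial (Fin n) ℝ) :
    bracket (∑ a ∈ s, F a) (∑ b ∈ t, G b) = ∑ a ∈ s, ∑ b ∈ t, bracket (F a) (G b) := by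
  ext1 i
  simp only [bracket, Finset.sum_apply, map_sum, Finset.sum_mul, Finset.mul_sum,
    Finset.sum_sub_distrib]
  congr 1
  · rw [Finset.sum_comm]
    exact Finset.sum_congr rfl fun a _ => Finset.sum_comm
  · rw [Finset.sum_comm, Finset.sum_congr rfl fun b _ => Finset.sum_comm]
    exact Finset.sum_comm

theorem homogeneousComponent_bracket_sum_range {F G : ℕ → Fin n → MvPolynomial (Fin n) ℝ}
    (hF : ∀ k i, (F k i).IsHomogeneous (k + 1)) (hG : ∀ k i, (G k i).IsHomogeneous (k + 1))
    (p j : ℕ) (i : Fin n) :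
    homogeneousComponent (p + j + 1)
        (bracket (∑ a ∈ Finset.range (p + 1), F a) (∑ b ∈ Finset.range (j + 1), G b) i)
      = bracket (F p) (G j) i := by
  have hcomp : ∀ a b, homogeneousComponent (p + j + 1) (bracket (F a) (G b) i)
      = if p + j + 1 = a + b + 1 then bracket (F a) (G b) i else 0 := fun a b =>
    homogeneousComponent_of_mem (bracket_isHomogeneous (hF a) (hG b) i)
  simp only [bracket_sum_sum, Finset.sum_apply, map_sum, hcomp]
  rw [Finset.sum_eq_single_of_mem p (by simp), Finset.sum_eq_single_of_mem j (by simp),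
    if_pos rfl]
  · intro b hb hbj
    rw [if_neg (by simp at hb; omega)]
  · intro a ha hap
    refine Finset.sum_eq_zero fun b hb => if_neg ?_
    simp at ha hb
    omega

theorem bracket_C_mul_X_pow (c : ℝ) (p : ℕ) (G : Fin n → MvPolynomial (Fin n) ℝ) (i : Fin n) :
    bracket (fun l => C c * X l ^ (p + 1)) G i
      = C c * (∑ l, X l ^ p * (X l * pderiv l (G i)) - C ((p : ℝ) + 1) * X i ^ p * G i) := by
  have hdiag : ∑ l, pderiv l (C c * X i ^ (p + 1)) * G l
      = C c * (C ((p : ℝ) + 1) * X i ^ p * G i) := by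
    rw [Finset.sum_eq_single i (fun l _ hli => by simp [pderiv_X_of_ne hli.symm]) (by simp)]
    simp only [pderiv_C_mul, pderiv_pow, pderiv_X_self, Nat.add_sub_cancel, map_add, map_natCast,
      Nat.cast_add, Nat.cast_one, map_one]
    ring
  rw [bracket, hdiag, mul_sub, Finset.mul_sum]
  congr 1
  exact Finset.sum_congr rfl fun l _ => by ring

end Bracket

/-- Let `p ≥ 1` and `F = F_0 + ⋯ + F_p` with `F_i ∈ L_i` and top term
`F_p(x) = (1/(p+1)) (x_1^{p+1}, …, x_n^{p+1})`.  There is no centralizer of `F` of the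
form `G = G_0 + ⋯ + G_j` with `G_i ∈ L_i`, `G_j ≠ 0` and `j ≠ p`: if
`[F, G_0 + ⋯ + G_j] = 0` and `G_j ≠ 0`, then `j = p`. -/
theorem centralizer_top_degree {n : ℕ} (p : ℕ) (hp : 1 ≤ p)
    (F : ℕ → Fin n → MvPolynomial (Fin n) ℝ)
    (hFhom : ∀ k i, (F k i).IsHomogeneous (k + 1))
    (hFtop : F p = fun i => C (((p : ℝ) + 1)⁻¹) * X i ^ (p + 1))
    (j : ℕ) (G : ℕ → Fin n → MvPolynomial (Fin n) ℝ)
    (hGhom : ∀ k i, (G k i).IsHomogeneous (k + 1))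
    (hGj : G j ≠ 0)
    (hcomm : bracket (∑ i ∈ Finset.range (p + 1), F i)
        (∑ i ∈ Finset.range (j + 1), G i) = 0) :
    j = p := by
  obtain ⟨i, hgi⟩ : ∃ i, G j i ≠ 0 := by
    by_contra! h
    exact hGj (funext h)
  have htop : bracket (F p) (G j) i = 0 := by
    rw [← homogeneousComponent_bracket_sum_range hFhom hGhom, hcomm, Pi.zero_apply, map_zero]
  have hpde : ∑ l, X l ^ p * (X l * pderiv l (G j i)) = C ((p : ℝ) + 1) * X i ^ p * G j i := by
    rw [hFtop, bracket_C_mul_X_pow, mul_eq_zero, C_eq_zero, sub_eq_zero] at htop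
    exact htop.resolve_left (by positivity)
  have hdeg (k : Fin n) : degreeOf k (G j i) = if k = i then p + 1 else 0 := by
    have h := natCast_degreeOf_eq_of_sum_X_pow_mul_X_mul_pderiv hp _ i hgi hpde k
    split_ifs at h ⊢ <;> exact_mod_cast h
  have hsingle := single_degreeOf_mem_support hgi fun k hk => by rw [hdeg, if_neg hk]
  have hweight := hGhom j i (mem_support_iff.1 hsingle)
  rw [Finsupp.weight_single, hdeg, if_pos rfl, Pi.one_apply, smul_eq_mul, mul_one] at hweight
  omega
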